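/- arXiv:2102.13524 — 2 statements merged into one kernel-verified Lean document; each statement's English description precedes it below -/
import Mathlib

section
/- For any N-qubit density matrix ρ and any local unitary u, the quantity X(u) = 2^N ∑_{s,s'} (-2)^{-D[s,s']} P_u(s) P_u(s') can be rewritten as X(u) = 2^{-N} ∑_{A ⊆ {1,...,N}} 3^{|A|} ⟨σ^z_A⟩², where ⟨σ^z_A⟩ = Tr(σ^z_A u ρ u†) and σ^z_A is the tensor product of Pauli-Z on sites in A (identity elsewhere). -/
open Matrix BigOperators
open scoped ComplexOrder

noncomputable section

/-- Computational basis labels for `N` qubits. -/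
abbrev QBasis (N : ℕ) := Fin N → Bool

/-- Hamming distance between two bitstrings. -/
def hamming {N : ℕ} (s s' : QBasis N) : ℕ :=
  (Finset.univ.filter fun i => s i ≠ s' i).card

/-- The Pauli-Z string `σ^z_A`: Pauli-Z on the sites in `A`, identity elsewhere. -/
def zString {N : ℕ} (A : Finset (Fin N)) : Matrix (QBasis N) (QBasis N) ℂ :=
  Matrix.diagonal fun s => ∏ i ∈ A, (if s i then (-1 : ℂ) else 1)

/-- `X(u) = 2^N ∑_{s,s'} (-2)^{-D[s,s']} P_u(s) P_u(s')
    = 2^{-N} ∑_A 3^{|A|} ⟨σ^z_A⟩²`. -/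
theorem stmt0 {N : ℕ} (ρ u : Matrix (QBasis N) (QBasis N) ℂ)
    (hρ : ρ.PosSemidef) (htr : ρ.trace = 1)
    (hu : u ∈ Matrix.unitaryGroup (QBasis N) ℂ) :
    (2 : ℂ) ^ N *
        ∑ s : QBasis N, ∑ s' : QBasis N,
          (-2 : ℂ)⁻¹ ^ hamming s s' * (u * ρ * uᴴ) s s * (u * ρ * uᴴ) s' s' =
      ((2 : ℂ) ^ N)⁻¹ *
        ∑ A : Finset (Fin N),
          (3 : ℂ) ^ A.card * (Matrix.trace (zString A * (u * ρ * uᴴ))) ^ 2 := by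
  classical
  set M := u * ρ * uᴴ with hM
  set P : QBasis N → ℂ := fun s => M s s with hP
  set ε : QBasis N → Fin N → ℂ := fun s i => if s i then (-1:ℂ) else 1 with hε
  have htr' : ∀ A : Finset (Fin N),
      Matrix.trace (zString A * M) = ∑ s, (∏ i ∈ A, ε s i) * P s := by
    intro A
    simp [Matrix.trace, zString, Matrix.diagonal_mul, Matrix.diag, hε, hP]
  have hsq : ∀ A : Finset (Fin N),
      (Matrix.trace (zString A * M))^2
        = ∑ s, ∑ s', ((∏ i ∈ A, ε s i) * (∏ i ∈ A, ε s' i)) * (P s * P s') := by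
    intro A
    rw [htr', sq, Finset.sum_mul_sum]
    refine Finset.sum_congr rfl fun s _ => Finset.sum_congr rfl fun s' _ => by ring
  have hRHS : ∑ A : Finset (Fin N), (3:ℂ)^A.card * (Matrix.trace (zString A * M))^2
      = ∑ s, ∑ s', (∏ i, (3 * (ε s i * ε s' i) + 1)) * (P s * P s') := by
    simp only [hsq, Finset.mul_sum]
    rw [Finset.sum_comm]
    refine Finset.sum_congr rfl fun s _ => ?_
    rw [Finset.sum_comm]
    refine Finset.sum_congr rfl fun s' _ => ?_
    rw [Finset.prod_add]
    simp only [Finset.prod_const_one, mul_one, Finset.powerset_univ, Finset.sum_mul]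
    refine Finset.sum_congr rfl fun A _ => ?_
    simp only [Finset.prod_mul_distrib, Finset.prod_const]
    ring
  rw [hRHS, Finset.mul_sum, Finset.mul_sum]
  refine Finset.sum_congr rfl fun s _ => ?_
  rw [Finset.mul_sum, Finset.mul_sum]
  refine Finset.sum_congr rfl fun s' _ => ?_
  have h1 : (∏ i, (3 * (ε s i * ε s' i) + 1))
      = ∏ i, (if s i = s' i then (4:ℂ) else -2) := by
    refine Finset.prod_congr rfl fun i _ => ?_
    rcases Bool.eq_false_or_eq_true (s i) with h | h <;>
      rcases Bool.eq_false_or_eq_true (s' i) with h' | h' <;>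
      simp [hε, h, h'] <;> norm_num
  have hD : hamming s s' ≤ N := by
    simpa [hamming] using (Finset.card_filter_le Finset.univ fun i => s i ≠ s' i)
  have hcard : (Finset.univ.filter fun i : Fin N => s i = s' i).card = N - hamming s s' := by
    have := Finset.card_filter_add_card_filter_not
      (s := (Finset.univ : Finset (Fin N))) (p := fun i => s i = s' i)
    simp only [Finset.card_univ, Fintype.card_fin] at this
    have h2 : (Finset.univ.filter fun i : Fin N => ¬ (s i = s' i)).card = hamming s s' := rfl
    omega
  have h2 : (∏ i, (if s i = s' i then (4:ℂ) else -2))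
      = 4 ^ (N - hamming s s') * (-2) ^ hamming s s' := by
    rw [Finset.prod_ite]
    simp only [Finset.prod_const, hcard]
    rfl
  rw [h1, h2]
  have hne : ((-2:ℂ)) ^ hamming s s' ≠ 0 := pow_ne_zero _ (by norm_num)
  have h2N : ((2:ℂ)) ^ N ≠ 0 := pow_ne_zero _ two_ne_zero
  have key : (2:ℂ)^N * (-2:ℂ)⁻¹ ^ hamming s s'
      = ((2:ℂ)^N)⁻¹ * (4 ^ (N - hamming s s') * (-2) ^ hamming s s') := by
    rw [inv_pow]
    field_simp
    have : ((4:ℂ)) ^ (N - hamming s s') * ((-2) ^ hamming s s' * (-2) ^ hamming s s')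
        = 4 ^ N := by
      rw [← mul_pow]
      norm_num
      rw [← pow_add, Nat.sub_add_cancel hD]
    rw [mul_comm, sq ((-2:ℂ) ^ hamming s s'), this, sq]
    rw [show (4:ℂ) = 2^2 by norm_num, ← pow_mul, two_mul, pow_add]
  calc (2:ℂ)^N * ((-2:ℂ)⁻¹ ^ hamming s s' * P s * P s')
      = ((2:ℂ)^N * (-2:ℂ)⁻¹ ^ hamming s s') * (P s * P s') := by ring
    _ = _ := by rw [key]; ring
end
end

section
/- (Perfect importance sampler, Γ₂) The integral identity (1/4) ∫_{-1}^{1} (10 + 6z²)/(1 + 3z²) dz = 1 + 4π/(3√3) holds; hence for an N-qubit pure product state with perfect importance sampling, Γ₂ = (1 + 4π/(3√3))^N. -/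
open MeasureTheory Real

lemma arctan_sqrt_three : Real.arctan (Real.sqrt 3) = π / 3 := by
  rw [← Real.tan_pi_div_three, Real.arctan_tan] <;> linarith [Real.pi_pos]

lemma aux_integral :
    (∫ z in (-1 : ℝ)..1, (10 + 6 * z ^ 2) / (1 + 3 * z ^ 2))
      = 4 + 16 * π / (3 * Real.sqrt 3) := by
  have h3 : (0:ℝ) < Real.sqrt 3 := Real.sqrt_pos.mpr (by norm_num)
  have hsq : Real.sqrt 3 ^ 2 = 3 := Real.sq_sqrt (by norm_num)
  have key : ∀ z : ℝ, (10 + 6 * z ^ 2) / (1 + 3 * z ^ 2)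
      = 2 + 8 * ((1:ℝ) / (1 + (Real.sqrt 3 * z) ^ 2)) := by
    intro z
    have hz : (0:ℝ) < 1 + 3 * z ^ 2 := by positivity
    field_simp
    ring_nf
    nlinarith [hsq, sq_nonneg z]
  have hcont : Continuous fun z : ℝ => (1:ℝ) / (1 + (Real.sqrt 3 * z) ^ 2) := by
    apply continuous_const.div (by continuity)
    intro x; positivity
  rw [intervalIntegral.integral_congr (g := fun z => 2 + 8 * ((1:ℝ) / (1 + (Real.sqrt 3 * z) ^ 2)))
      (fun z _ => key z)]
  rw [intervalIntegral.integral_add (by simp [intervalIntegrable_const])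
      ((hcont.intervalIntegrable _ _).const_mul 8),
    intervalIntegral.integral_const, intervalIntegral.integral_const_mul]
  have hcomp : (∫ z in (-1:ℝ)..1, (1:ℝ) / (1 + (Real.sqrt 3 * z) ^ 2))
      = (Real.sqrt 3)⁻¹ • ∫ x in (Real.sqrt 3 * (-1))..(Real.sqrt 3 * 1), (1:ℝ) / (1 + x ^ 2) :=
    intervalIntegral.integral_comp_mul_left (fun x => (1:ℝ)/(1 + x^2)) (ne_of_gt h3)
  rw [hcomp, integral_one_div_one_add_sq]
  simp only [mul_one, mul_neg_one, Real.arctan_neg, _root_.arctan_sqrt_three]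
  rw [smul_eq_mul]
  field_simp
  linear_combination (16 * π) * mul_inv_cancel₀ (ne_of_gt h3)

/-- perfect importance sampler, Γ₂:
    `(1/4)∫_{-1}^1 (10 + 6z²)/(1 + 3z²) dz = 1 + 4π/(3√3)`, hence
    `Γ₂ = (1 + 4π/(3√3))^N`. -/
theorem stmt14 :
    ((1 / 4 : ℝ) * ∫ z in (-1 : ℝ)..1, (10 + 6 * z ^ 2) / (1 + 3 * z ^ 2)
        = 1 + 4 * π / (3 * Real.sqrt 3)) ∧
    ∀ N : ℕ, ((1 / 4 : ℝ) * ∫ z in (-1 : ℝ)..1, (10 + 6 * z ^ 2) / (1 + 3 * z ^ 2)) ^ N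
        = (1 + 4 * π / (3 * Real.sqrt 3)) ^ N := by
  have h : (1 / 4 : ℝ) * ∫ z in (-1 : ℝ)..1, (10 + 6 * z ^ 2) / (1 + 3 * z ^ 2)
      = 1 + 4 * π / (3 * Real.sqrt 3) := by
    rw [aux_integral]; ring
  exact ⟨h, fun N => by rw [h]⟩
end
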